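/- For all P, Q ∈ ℝ³, as t increases to 1 the value ρ_t(P,Q) converges to d_E(P,Q); that is, the limit of ρ_t(P,Q) as t → 1⁻ equals d_E(P,Q). -/

import Mathlib

noncomputable section
open scoped RealInnerProductSpace

/-- The unit 2-sphere in `ℝ³`, i.e. in `EuclideanSpace ℝ (Fin 3)`. -/
def S2 : Set (EuclideanSpace ℝ (Fin 3)) := Metric.sphere (0 : EuclideanSpace ℝ (Fin 3)) 1

/-- The angle parameter `α = arcsin ((√(2 - t²) - t) / 2)`. -/
def alphaAngle (t : ℝ) : ℝ := Real.arcsin ((Real.sqrt (2 - t ^ 2) - t) / 2)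

/-- The metric `d_t` on the unit sphere: `d_t(P,Q) = d_E(P,Q)` if `∠POQ ≤ π - 2α`,
and `d_t(P,Q) = 2t + d_E(-P,Q)` otherwise. -/
def dt (t : ℝ) (P Q : EuclideanSpace ℝ (Fin 3)) : ℝ :=
  if EuclideanGeometry.angle P (0 : EuclideanSpace ℝ (Fin 3)) Q ≤ Real.pi - 2 * alphaAngle t
  then dist P Q
  else 2 * t + dist (-P) Q

/-- A point on the unit sphere at Euclidean distance `r` (for `0 ≤ r ≤ 2`) from the
base point `spherePt 0 = (1,0,0)`. -/
def spherePt (r : ℝ) : EuclideanSpace ℝ (Fin 3) :=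
  (WithLp.equiv 2 (Fin 3 → ℝ)).symm ![1 - r ^ 2 / 2, r * Real.sqrt (1 - r ^ 2 / 4), 0]

/-- The value `d_t(ε⁻¹(X), ε⁻¹(Y))` for points `X, Y ∈ ℝ³` with `d_E(X,Y) ≤ 2`, computed
via the concrete pair of unit-sphere points `spherePt 0`, `spherePt (d_E(X,Y))` at the same
Euclidean distance; by invariance of `d_t` under Euclidean isometries this agrees with the
value obtained from any isometric embedding `ε : S² → ℝ³` whose image contains `X` and `Y`. -/
def dtChord (t r : ℝ) : ℝ := dt t (spherePt 0) (spherePt r)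

/-- The set of values `∑_{i=1}^n d_t(X_{i-1}, X_i)` over all chains
`(X_0, …, X_n) ∈ Γ_{P,Q}`, i.e. chains from `P` to `Q` with all steps of Euclidean
length at most `2`. -/
def chainSums (t : ℝ) (P Q : EuclideanSpace ℝ (Fin 3)) : Set ℝ :=
  { s : ℝ | ∃ n : ℕ, ∃ X : Fin (n + 1) → EuclideanSpace ℝ (Fin 3),
      X 0 = P ∧ X (Fin.last n) = Q ∧
      (∀ i : Fin n, dist (X i.castSucc) (X i.succ) ≤ 2) ∧
      s = ∑ i : Fin n, dtChord t (dist (X i.castSucc) (X i.succ)) }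

/-- The metric `ρ_t(P,Q) = inf { ∑_{i=1}^n d_t(X_{i-1},X_i) | (X_0,…,X_n) ∈ Γ_{P,Q} }`. -/
def rho (t : ℝ) (P Q : EuclideanSpace ℝ (Fin 3)) : ℝ := sInf (chainSums t P Q)

lemma spherePt_apply (r : ℝ) (i : Fin 3) :
    spherePt r i = ![1 - r ^ 2 / 2, r * Real.sqrt (1 - r ^ 2 / 4), 0] i := rfl

lemma dist_spherePt (r : ℝ) (h0 : 0 ≤ r) (h2 : r ≤ 2) :
    dist (spherePt 0) (spherePt r) = r := by
  have hs : Real.sqrt (1 - r ^ 2 / 4) ^ 2 = 1 - r ^ 2 / 4 := by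
    rw [Real.sq_sqrt]; nlinarith
  have habs : |r| = r := abs_of_nonneg h0
  have habs2 : |Real.sqrt (1 - r ^ 2 / 4)| = Real.sqrt (1 - r ^ 2 / 4) :=
    abs_of_nonneg (Real.sqrt_nonneg _)
  rw [EuclideanSpace.dist_eq, Fin.sum_univ_three]
  simp only [spherePt_apply]
  norm_num [Matrix.cons_val_zero, Matrix.cons_val_one, Matrix.head_cons, Matrix.cons_val_two, Matrix.tail_cons]
  rw [habs, habs2, show (r^2/2)^2 + (r * Real.sqrt (1 - r^2/4))^2 = r^2 by
    rw [mul_pow, hs]; ring]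
  exact Real.sqrt_sq h0

lemma norm_spherePt (r : ℝ) (h0 : 0 ≤ r) (h2 : r ≤ 2) : ‖spherePt r‖ = 1 := by
  have hs : Real.sqrt (1 - r ^ 2 / 4) ^ 2 = 1 - r ^ 2 / 4 := by
    rw [Real.sq_sqrt]; nlinarith
  have habs : |r| = r := abs_of_nonneg h0
  have habs2 : |Real.sqrt (1 - r ^ 2 / 4)| = Real.sqrt (1 - r ^ 2 / 4) :=
    abs_of_nonneg (Real.sqrt_nonneg _)
  rw [EuclideanSpace.norm_eq, Fin.sum_univ_three]
  simp only [spherePt_apply, Matrix.cons_val_zero, Matrix.cons_val_one, Matrix.head_cons,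
    Matrix.cons_val_two, Matrix.tail_cons, Real.norm_eq_abs, abs_mul, habs, habs2, sq_abs,
    abs_zero]
  rw [show ((1:ℝ)-r^2/2)^2 + (r * Real.sqrt (1 - r^2/4))^2 + 0^2 = 1 by
    rw [mul_pow, hs]; ring]
  exact Real.sqrt_one

lemma inner_spherePt (r : ℝ) : ⟪spherePt 0, spherePt r⟫ = 1 - r ^ 2 / 2 := by
  rw [PiLp.inner_apply, Fin.sum_univ_three]
  simp only [spherePt_apply, RCLike.inner_apply, conj_trivial]
  norm_num [Matrix.cons_val_zero, Matrix.cons_val_one, Matrix.head_cons, Matrix.cons_val_two, Matrix.tail_cons]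

lemma alphaAngle_le (t : ℝ) (ht : 0 ≤ t) : alphaAngle t ≤ Real.pi / 4 := by
  have h1 : (Real.sqrt (2 - t ^ 2) - t) / 2 ≤ Real.sqrt 2 / 2 := by
    have : Real.sqrt (2 - t ^ 2) ≤ Real.sqrt 2 := Real.sqrt_le_sqrt (by nlinarith)
    linarith
  have h2 : Real.arcsin (Real.sqrt 2 / 2) = Real.pi / 4 := by
    rw [← Real.sin_pi_div_four]
    exact Real.arcsin_sin (by linarith [Real.pi_pos]) (by linarith [Real.pi_pos])
  calc alphaAngle t ≤ Real.arcsin (Real.sqrt 2 / 2) := Real.monotone_arcsin h1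
    _ = Real.pi / 4 := h2

lemma angle_spherePt_le (r : ℝ) (h0 : 0 ≤ r) (h1 : r ≤ 1) :
    EuclideanGeometry.angle (spherePt 0) (0 : EuclideanSpace ℝ (Fin 3)) (spherePt r)
      ≤ Real.pi / 2 := by
  simp only [EuclideanGeometry.angle, vsub_eq_sub, sub_zero, InnerProductGeometry.angle]
  rw [Real.arccos_le_pi_div_two]
  rw [inner_spherePt]
  apply div_nonneg (by nlinarith)
  positivity

lemma dtChord_of_small (t r : ℝ) (ht : 0 ≤ t) (h0 : 0 ≤ r) (h1 : r ≤ 1) : dtChord t r = r := by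
  rw [dtChord, dt, if_pos, dist_spherePt r h0 (by linarith)]
  have h2 := angle_spherePt_le r h0 h1
  have h3 := alphaAngle_le t ht
  linarith

lemma dtChord_ge (t r : ℝ) (ht0 : 0 ≤ t) (ht1 : t ≤ 1) (h0 : 0 ≤ r) (h2 : r ≤ 2) :
    t * r ≤ dtChord t r := by
  rw [dtChord, dt]
  split_ifs with h
  · rw [dist_spherePt r h0 h2]; nlinarith
  · have := dist_nonneg (x := -spherePt 0) (y := spherePt r); nlinarith

lemma chain_dist {n : ℕ} (X : Fin (n + 1) → EuclideanSpace ℝ (Fin 3)) :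
    dist (X 0) (X (Fin.last n)) ≤ ∑ i : Fin n, dist (X i.castSucc) (X i.succ) := by
  set Y : ℕ → EuclideanSpace ℝ (Fin 3) :=
    fun k => X ⟨min k n, Nat.lt_succ_of_le (min_le_right _ _)⟩ with hY
  have h := dist_le_range_sum_dist Y n
  have hy0 : Y 0 = X 0 := by
    simp [hY]
  have hyn : Y n = X (Fin.last n) := by
    simp [hY, Fin.last]
  rw [hy0, hyn] at h
  refine h.trans_eq ?_
  rw [← Fin.sum_univ_eq_sum_range (fun k => dist (Y k) (Y (k + 1))) n]
  refine Finset.sum_congr rfl fun i _ => ?_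
  have h1 : Y ↑i = X i.castSucc := congrArg X (Fin.ext (Nat.min_eq_left i.isLt.le))
  have h2 : Y (↑i + 1) = X i.succ := congrArg X (Fin.ext (Nat.min_eq_left i.isLt))
  rw [h1, h2]

lemma dist_mem_chainSums (t : ℝ) (ht : 0 ≤ t) (P Q : EuclideanSpace ℝ (Fin 3)) :
    dist P Q ∈ chainSums t P Q := by
  set d : ℝ := dist P Q with hd
  set n : ℕ := ⌈d⌉₊ + 1 with hn
  have hd0 : 0 ≤ d := dist_nonneg
  have hnpos : (0:ℝ) < n := by positivity
  have hdn : d / n ≤ 1 := by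
    rw [div_le_one hnpos]
    calc d ≤ (⌈d⌉₊ : ℝ) := Nat.le_ceil d
      _ ≤ n := by exact_mod_cast Nat.le_succ _
  have hdn0 : 0 ≤ d / n := by positivity
  refine ⟨n, fun i => P + (((i : ℕ) : ℝ) / n) • (Q - P), ?_, ?_, ?_, ?_⟩
  · simp
  · simp only [Fin.val_last]
    rw [div_self hnpos.ne', one_smul]
    abel
  · intro i
    rw [dist_add_left, dist_eq_norm, ← sub_smul, norm_smul]
    simp only [Fin.coe_castSucc, Fin.val_succ, Nat.cast_add, Nat.cast_one]
    rw [show (↑i / (n:ℝ) - (↑i + 1) / n) = -(1/n) by field_simp; ring]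
    rw [norm_neg, Real.norm_of_nonneg (by positivity), ← dist_eq_norm, dist_comm Q P, ← hd]
    calc 1/(n:ℝ) * d = d / n := by ring
      _ ≤ 1 := hdn
      _ ≤ 2 := by norm_num
  · have hstep : ∀ i : Fin n,
        dist (P + (((i.castSucc : ℕ) : ℝ) / n) • (Q - P))
          (P + (((i.succ : ℕ) : ℝ) / n) • (Q - P)) = d / n := by
      intro i
      rw [dist_add_left, dist_eq_norm, ← sub_smul, norm_smul]
      simp only [Fin.coe_castSucc, Fin.val_succ, Nat.cast_add, Nat.cast_one]
      rw [show (↑i / (n:ℝ) - (↑i + 1) / n) = -(1/n) by field_simp; ring]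
      rw [norm_neg, Real.norm_of_nonneg (by positivity), ← dist_eq_norm, dist_comm Q P, ← hd]
      ring
    rw [Finset.sum_congr rfl fun i _ => by rw [hstep i, dtChord_of_small t _ ht hdn0 hdn]]
    rw [Finset.sum_const, Finset.card_univ, Fintype.card_fin, nsmul_eq_mul]
    field_simp

lemma le_chainSums (t : ℝ) (ht0 : 0 ≤ t) (ht1 : t ≤ 1) (P Q : EuclideanSpace ℝ (Fin 3)) :
    ∀ s ∈ chainSums t P Q, t * dist P Q ≤ s := by
  rintro s ⟨n, X, h0, hl, hstep, rfl⟩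
  calc t * dist P Q = t * dist (X 0) (X (Fin.last n)) := by rw [h0, hl]
    _ ≤ t * ∑ i : Fin n, dist (X i.castSucc) (X i.succ) :=
        mul_le_mul_of_nonneg_left (chain_dist X) ht0
    _ = ∑ i : Fin n, t * dist (X i.castSucc) (X i.succ) := Finset.mul_sum _ _ _
    _ ≤ ∑ i : Fin n, dtChord t (dist (X i.castSucc) (X i.succ)) :=
        Finset.sum_le_sum fun i _ => dtChord_ge t _ ht0 ht1 dist_nonneg (hstep i)

lemma rho_le (t : ℝ) (ht0 : 0 ≤ t) (ht1 : t ≤ 1) (P Q : EuclideanSpace ℝ (Fin 3)) :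
    rho t P Q ≤ dist P Q :=
  csInf_le ⟨t * dist P Q, fun s hs => le_chainSums t ht0 ht1 P Q s hs⟩
    (dist_mem_chainSums t ht0 P Q)

lemma le_rho (t : ℝ) (ht0 : 0 ≤ t) (ht1 : t ≤ 1) (P Q : EuclideanSpace ℝ (Fin 3)) :
    t * dist P Q ≤ rho t P Q :=
  le_csInf ⟨dist P Q, dist_mem_chainSums t ht0 P Q⟩ (le_chainSums t ht0 ht1 P Q)

theorem rho_tendsto_dist (P Q : EuclideanSpace ℝ (Fin 3)) :
    Filter.Tendsto (fun t : ℝ => rho t P Q)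
      (nhdsWithin 1 (Set.Ioo (0 : ℝ) 1)) (nhds (dist P Q)) := by
  have h1 : Filter.Tendsto (fun t : ℝ => t * dist P Q)
      (nhdsWithin 1 (Set.Ioo (0 : ℝ) 1)) (nhds (dist P Q)) := by
    have h0 : Filter.Tendsto (fun t : ℝ => t * dist P Q) (nhds 1) (nhds (1 * dist P Q)) :=
      (continuous_id.mul continuous_const).tendsto 1
    rw [one_mul] at h0
    exact h0.mono_left nhdsWithin_le_nhds
  refine tendsto_of_tendsto_of_tendsto_of_le_of_le' h1 tendsto_const_nhds ?_ ?_
  · filter_upwards [self_mem_nhdsWithin] with t ht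
    exact le_rho t ht.1.le ht.2.le P Q
  · filter_upwards [self_mem_nhdsWithin] with t ht
    exact rho_le t ht.1.le ht.2.le P Q
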